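/- arXiv:2208.09407 — 3 statements merged into one kernel-verified Lean document; each statement's English description precedes it below -/
import Mathlib

section
/- In a Stackelberg security game, if x and x' are conservative strategies with agent best-response values w = v(x, br(x)) and w' = v(x', br(x')), then: (i) if w = w' then x = x'; (ii) if w < w', then BR(x') ⊆ BR(x), and x_y ≥ x'_y for every target y, with equality only when x_y = x'_y = 0. -/
/-- The best-response set of the agent to principal strategy `x`:
targets attaining the maximal agent payoff `v y (x y)`. -/
def brSet {n : ℕ} (v : Fin n → ℝ → ℝ) (x : Fin n → ℝ) : Set (Fin n) :=
  {y | ∀ y', v y' (x y') ≤ v y (x y)}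

/-- A strategy is conservative if it puts positive mass only on best responses. -/
def Conservative {n : ℕ} (v : Fin n → ℝ → ℝ) (x : Fin n → ℝ) : Prop :=
  ∀ y, 0 < x y → y ∈ brSet v x

/-- The agent's best-response value `v(x, br(x)) = max_y v^y(x_y)`. -/
noncomputable def agentVal {n : ℕ} (v : Fin n → ℝ → ℝ) (x : Fin n → ℝ) : ℝ :=
  ⨆ y, v y (x y)

/-- In a Stackelberg security game, if `x, x'` are conservative
strategies with best-response values `w = v(x, br(x))`, `w' = v(x', br(x'))`, then
(i) `w = w'` implies `x = x'`; (ii) if `w < w'` then `BR(x') ⊆ BR(x)` and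
`x_y ≥ x'_y` for all targets `y`, with equality only if `x_y = x'_y = 0`. -/
theorem stmt4 {n : ℕ} (hn : 0 < n)
    (X : Set (Fin n → ℝ)) (hXsub : X ⊆ Set.Icc (0 : Fin n → ℝ) 1)
    (hXclosed : IsClosed X) (hXconv : Convex ℝ X)
    (hXdc : ∀ x ∈ X, ∀ x' : Fin n → ℝ, 0 ≤ x' → x' ≤ x → x' ∈ X)
    (v : Fin n → ℝ → ℝ)
    (hvmap : ∀ y, Set.MapsTo (v y) (Set.Icc (0:ℝ) 1) (Set.Icc (0:ℝ) 1))
    (hvcont : ∀ y, ContinuousOn (v y) (Set.Icc (0:ℝ) 1))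
    (hvdec : ∀ y, StrictAntiOn (v y) (Set.Icc (0:ℝ) 1))
    (x x' : Fin n → ℝ) (hx : x ∈ X) (hx' : x' ∈ X)
    (hcons : Conservative v x) (hcons' : Conservative v x')
    (w w' : ℝ) (hw : w = agentVal v x) (hw' : w' = agentVal v x') :
    (w = w' → x = x') ∧
    (w < w' → brSet v x' ⊆ brSet v x ∧
      ∀ y, x' y ≤ x y ∧ (x y = x' y → x y = 0)) := by
  have hne : Nonempty (Fin n) := ⟨⟨0, hn⟩⟩
  have hb : ∀ z : Fin n → ℝ, BddAbove (Set.range fun y => v y (z y)) :=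
    fun z => (Set.finite_range _).bddAbove
  have hle : ∀ (z : Fin n → ℝ) (y : Fin n), v y (z y) ≤ agentVal v z :=
    fun z y => le_ciSup (hb z) y
  have hmem : ∀ z ∈ X, ∀ y, z y ∈ Set.Icc (0:ℝ) 1 :=
    fun z hz y => ⟨(hXsub hz).1 y, (hXsub hz).2 y⟩
  have h0 : (0:ℝ) ∈ Set.Icc (0:ℝ) 1 := ⟨le_refl _, zero_le_one⟩
  -- membership in brSet ↔ value equals agentVal
  have hbr : ∀ (z : Fin n → ℝ) (y : Fin n), y ∈ brSet v z → v y (z y) = agentVal v z :=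
    fun z y hy => le_antisymm (hle z y) (ciSup_le hy)
  -- key facts for conservative strategies
  have key : ∀ z ∈ X, Conservative v z → ∀ y : Fin n,
      (0 < z y → v y (z y) = agentVal v z ∧ agentVal v z < v y 0) ∧
      (z y = 0 → v y 0 ≤ agentVal v z) := by
    intro z hz hc y
    constructor
    · intro hpos
      have h1 : v y (z y) = agentVal v z := hbr z y (hc y hpos)
      refine ⟨h1, ?_⟩
      rw [← h1]
      exact hvdec y h0 (hmem z hz y) hpos
    · intro h0y
      have := hle z y
      rwa [h0y] at this
  -- strict anti comparison: v y a < v y b → b < a  (a,b ∈ Icc)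
  have hcmp : ∀ (y : Fin n) (a b : ℝ), a ∈ Set.Icc (0:ℝ) 1 → b ∈ Set.Icc (0:ℝ) 1 →
      v y a < v y b → b < a := by
    intro y a b ha hb hlt
    by_contra hab
    push_neg at hab
    exact absurd ((hvdec y).antitoneOn ha hb hab) (not_le.mpr hlt)
  constructor
  · -- (i)
    intro hww
    funext y
    rcases lt_or_eq_of_le ((hmem x hx y).1) with hpos | h0x
    · have hk := ((key x hx hcons y).1 hpos)
      have hpos' : 0 < x' y := by
        by_contra h
        push_neg at h
        have h0' : x' y = 0 := le_antisymm h (hmem x' hx' y).1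
        have := (key x' hx' hcons' y).2 h0'
        rw [← hw', ← hww, hw] at this
        exact absurd hk.2 (not_lt.mpr this)
      have hk' := ((key x' hx' hcons' y).1 hpos')
      have heq : v y (x y) = v y (x' y) := by
        rw [hk.1, hk'.1, ← hw, ← hw', hww]
      exact (hvdec y).injOn (hmem x hx y) (hmem x' hx' y) heq
    · rcases lt_or_eq_of_le ((hmem x' hx' y).1) with hpos' | h0x'
      · have hk' := ((key x' hx' hcons' y).1 hpos')
        have := (key x hx hcons y).2 h0x.symm
        rw [← hw, hww, hw'] at this
        exact absurd hk'.2 (not_lt.mpr this)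
      · rw [← h0x, ← h0x']
  · -- (ii)
    intro hlt
    have hmain : ∀ y : Fin n, 0 < x' y → x' y < x y := by
      intro y hpos'
      have hk' := ((key x' hx' hcons' y).1 hpos')
      have h1 : v y (x y) < v y (x' y) := by
        calc v y (x y) ≤ agentVal v x := hle x y
        _ < agentVal v x' := by rw [← hw, ← hw']; exact hlt
        _ = v y (x' y) := hk'.1.symm
      exact hcmp y (x y) (x' y) (hmem x hx y) (hmem x' hx' y) h1
    constructor
    · intro y hy
      have hv' : v y (x' y) = agentVal v x' := hbr x' y hy
      have h1 : v y (x y) < v y (x' y) := by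
        calc v y (x y) ≤ agentVal v x := hle x y
        _ < agentVal v x' := by rw [← hw, ← hw']; exact hlt
        _ = v y (x' y) := hv'.symm
      have hxpos : 0 < x y :=
        lt_of_le_of_lt (hmem x' hx' y).1
          (hcmp y (x y) (x' y) (hmem x hx y) (hmem x' hx' y) h1)
      exact hcons y hxpos
    · intro y
      rcases lt_or_eq_of_le ((hmem x' hx' y).1) with hpos' | h0x'
      · have := hmain y hpos'
        exact ⟨le_of_lt this, fun h => absurd h this.ne'⟩
      · exact ⟨h0x' ▸ (hmem x hx y).1, fun h => by rw [h, ← h0x']⟩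
end

section
/- In a Stackelberg security game with the width regularity assumption, the unique conservative optimal strategy x* belongs to every nonempty best-response region: for every target y, if K_y ≠ ∅ then x* ∈ K_y (equivalently, y ∈ BR(x*)). -/
/-- The principal's value `u(x, br(x)) = max_{y ∈ BR(x)} u^y(x_y)`. -/
noncomputable def princVal {n : ℕ} (v u : Fin n → ℝ → ℝ) (x : Fin n → ℝ) : ℝ :=
  sSup ((fun y => u y (x y)) '' brSet v x)

/-- the (unique) conservative optimal strategy `x*` belongs to every
nonempty best-response region: for each target `y`, if `K_y ≠ ∅` then `y ∈ BR(x*)`. -/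
theorem stmt6 {n : ℕ} (hn : 0 < n)
    (X : Set (Fin n → ℝ)) (hXsub : X ⊆ Set.Icc (0 : Fin n → ℝ) 1)
    (hXclosed : IsClosed X) (hXconv : Convex ℝ X) (hXne : X.Nonempty)
    (hXdc : ∀ x ∈ X, ∀ x' : Fin n → ℝ, 0 ≤ x' → x' ≤ x → x' ∈ X)
    (v u : Fin n → ℝ → ℝ)
    (hvmap : ∀ y, Set.MapsTo (v y) (Set.Icc (0:ℝ) 1) (Set.Icc (0:ℝ) 1))
    (hvcont : ∀ y, ContinuousOn (v y) (Set.Icc (0:ℝ) 1))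
    (hvdec : ∀ y, StrictAntiOn (v y) (Set.Icc (0:ℝ) 1))
    (humap : ∀ y, Set.MapsTo (u y) (Set.Icc (0:ℝ) 1) (Set.Icc (0:ℝ) 1))
    (hucont : ∀ y, ContinuousOn (u y) (Set.Icc (0:ℝ) 1))
    (huinc : ∀ y, StrictMonoOn (u y) (Set.Icc (0:ℝ) 1))
    (W : ℝ) (hW : 0 < W)
    (hwidth : ∀ y, (∃ x ∈ X, y ∈ brSet v x) → ∃ x ∈ X, y ∈ brSet v x ∧ W ≤ x y)
    (xs : Fin n → ℝ) (hxs : xs ∈ X) (hcons : Conservative v xs)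
    (hopt : ∀ x ∈ X, princVal v u x ≤ princVal v u xs) :
    ∀ y, (∃ x ∈ X, y ∈ brSet v x) → y ∈ brSet v xs := by
  classical
  haveI hne : Nonempty (Fin n) := ⟨⟨0, hn⟩⟩
  have hbdd : ∀ x : Fin n → ℝ, BddAbove (Set.range fun y => v y (x y)) :=
    fun x => (Set.finite_range _).bddAbove
  have hle : ∀ (x : Fin n → ℝ) y, v y (x y) ≤ agentVal v x :=
    fun x y => le_ciSup (hbdd x) y
  have hval : ∀ (x : Fin n → ℝ) y, y ∈ brSet v x → agentVal v x = v y (x y) :=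
    fun x y hy => le_antisymm (ciSup_le hy) (hle x y)
  have hmem : ∀ x ∈ X, ∀ y, x y ∈ Set.Icc (0:ℝ) 1 := by
    intro x hx y
    obtain ⟨h0, h1⟩ := hXsub hx
    exact ⟨h0 y, h1 y⟩
  have hanti : ∀ y, AntitoneOn (v y) (Set.Icc (0:ℝ) 1) := fun y => (hvdec y).antitoneOn
  -- key lemma: xs minimizes the agent value over X
  have key : ∀ x ∈ X, agentVal v xs ≤ agentVal v x := by
    intro x hx
    by_contra hlt
    push_neg at hlt
    set S := brSet v xs with hS
    have hA : ∀ y, xs y ≤ x y := by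
      intro y
      rcases eq_or_lt_of_le (hmem xs hxs y).1 with h0 | h0
      · rw [← h0]; exact (hmem x hx y).1
      · have hyS : y ∈ S := hcons y h0
        by_contra hxy
        push_neg at hxy
        have h1 : v y (xs y) < v y (x y) := hvdec y (hmem x hx y) (hmem xs hxs y) hxy
        have h2 : v y (x y) ≤ agentVal v x := hle x y
        have h3 : agentVal v xs = v y (xs y) := hval xs y hyS
        linarith
    have hB : ∀ y ∈ S, xs y < x y := by
      intro y hyS
      rcases lt_or_eq_of_le (hA y) with h | h
      · exact h
      · exfalso
        have h3 : agentVal v xs = v y (xs y) := hval xs y hyS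
        have h2 : v y (x y) ≤ agentVal v x := hle x y
        rw [h] at h3; linarith
    obtain ⟨y₀, hy₀⟩ : ∃ y₀, y₀ ∈ S := by
      obtain ⟨y₀, -, hy₀⟩ := Finset.exists_max_image Finset.univ (fun y => v y (xs y))
        ⟨⟨0,hn⟩, Finset.mem_univ _⟩
      exact ⟨y₀, fun y' => hy₀ y' (Finset.mem_univ _)⟩
    set m : ℝ := Finset.univ.sup' Finset.univ_nonempty
      (fun y => if y ∈ S then agentVal v x else v y (xs y)) with hm
    have hm_lt : m < agentVal v xs := by
      rw [hm, Finset.sup'_lt_iff]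
      intro y _
      by_cases h : y ∈ S
      · simpa [h] using hlt
      · simp only [h, if_false]
        have : ¬ ∀ y', v y' (xs y') ≤ v y (xs y) := h
        push_neg at this
        obtain ⟨y', hy'⟩ := this
        exact lt_of_lt_of_le hy' (hle xs y')
    have hxm : agentVal v x ≤ m := by
      have := Finset.le_sup' (fun y => if y ∈ S then agentVal v x else v y (xs y))
        (Finset.mem_univ y₀)
      simpa [hy₀, ← hm] using this
    have hnotS : ∀ y, y ∉ S → v y (xs y) ≤ m := by
      intro y hy
      have := Finset.le_sup' (fun y => if y ∈ S then agentVal v x else v y (xs y))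
        (Finset.mem_univ y)
      simpa [hy, ← hm] using this
    set c : ℝ := (m + agentVal v xs)/2 with hc
    have hc1 : m < c := by rw [hc]; linarith
    have hc2 : c < agentVal v xs := by rw [hc]; linarith
    have hz : ∀ y, ∃ z, xs y ≤ z ∧ z ≤ x y ∧ (y ∈ S → v y z = c) ∧ (y ∉ S → z = xs y) := by
      intro y
      by_cases hyS : y ∈ S
      · have hcont : ContinuousOn (v y) (Set.Icc (xs y) (x y)) :=
          (hvcont y).mono (Set.Icc_subset_Icc (hmem xs hxs y).1 (hmem x hx y).2)
        have hsub : Set.Icc (v y (x y)) (v y (xs y)) ⊆ v y '' Set.Icc (xs y) (x y) :=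
          intermediate_value_Icc' (hA y) hcont
        have hcmem : c ∈ Set.Icc (v y (x y)) (v y (xs y)) := by
          constructor
          · exact le_trans (hle x y) (le_trans hxm (le_of_lt hc1))
          · rw [← hval xs y hyS]; exact le_of_lt hc2
        obtain ⟨z, hzIcc, hzv⟩ := hsub hcmem
        exact ⟨z, hzIcc.1, hzIcc.2, fun _ => hzv, fun h => absurd hyS h⟩
      · exact ⟨xs y, le_refl _, hA y, fun h => absurd h hyS, fun _ => rfl⟩
    choose x' hx'1 hx'2 hx'3 hx'4 using hz
    have hx'X : x' ∈ X :=
      hXdc x hx x' (fun y => le_trans (hmem xs hxs y).1 (hx'1 y)) hx'2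
    have hx'mem : ∀ y, x' y ∈ Set.Icc (0:ℝ) 1 :=
      fun y => ⟨le_trans (hmem xs hxs y).1 (hx'1 y), le_trans (hx'2 y) (hmem x hx y).2⟩
    have hvx'' : ∀ y, y ∉ S → v y (x' y) < c := by
      intro y h; rw [hx'4 y h]; exact lt_of_le_of_lt (hnotS y h) hc1
    have hbr : brSet v x' = S := by
      ext y
      constructor
      · intro hy
        by_contra hyS
        have h1 : v y (x' y) < c := hvx'' y hyS
        have h2 : v y₀ (x' y₀) = c := hx'3 y₀ hy₀
        have h3 : v y₀ (x' y₀) ≤ v y (x' y) := hy y₀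
        linarith
      · intro hyS
        intro y'
        by_cases h : y' ∈ S
        · rw [hx'3 y' h, hx'3 y hyS]
        · rw [hx'3 y hyS]; exact le_of_lt (hvx'' y' h)
    have hstr : ∀ y ∈ S, xs y < x' y := by
      intro y hyS
      rcases lt_or_eq_of_le (hx'1 y) with h | h
      · exact h
      · exfalso
        have h1 := hx'3 y hyS
        rw [← h] at h1
        have h3 : agentVal v xs = v y (xs y) := hval xs y hyS
        linarith
    have hfin : ((fun y => u y (xs y)) '' S).Finite := Set.Finite.image _ (Set.toFinite S)
    have hfin' : ((fun y => u y (x' y)) '' brSet v x').Finite :=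
      Set.Finite.image _ (Set.toFinite _)
    have hPmem : princVal v u xs ∈ (fun y => u y (xs y)) '' S :=
      Set.Nonempty.csSup_mem ⟨_, Set.mem_image_of_mem _ hy₀⟩ hfin
    obtain ⟨y₁, hy₁S, hy₁⟩ := hPmem
    have hlt2 : u y₁ (xs y₁) < u y₁ (x' y₁) :=
      huinc y₁ (hmem xs hxs y₁) (hx'mem y₁) (hstr y₁ hy₁S)
    have hle2 : u y₁ (x' y₁) ≤ princVal v u x' :=
      le_csSup hfin'.bddAbove (Set.mem_image_of_mem _ (by rw [hbr]; exact hy₁S))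
    have hfinal := hopt x' hx'X
    simp only at hy₁
    linarith
  -- main argument
  rintro y ⟨x, hx, hyx⟩
  intro y'
  by_contra hcon
  push_neg at hcon
  have hxy0 : xs y = 0 := by
    rcases eq_or_lt_of_le (hmem xs hxs y).1 with h | h
    · exact h.symm
    · exact absurd (hcons y h y') (not_le.mpr hcon)
  have h1 : v y' (xs y') ≤ agentVal v xs := hle xs y'
  have h2 : agentVal v xs ≤ agentVal v x := key x hx
  have h3 : agentVal v x = v y (x y) := hval x y hyx
  have h4 : v y (x y) ≤ v y 0 :=
    hanti y ⟨le_refl 0, zero_le_one⟩ (hmem x hx y) (hmem x hx y).1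
  rw [hxy0] at hcon
  linarith
end

section
/- Suppose agents' utilities are strictly decreasing with slope bounds 1/C ≤ (v^y(s)−v^y(t))/(t−s) ≤ C for 0 ≤ s < t ≤ 1. If x̂ satisfies v(x̂, br(x̂)) ≤ v(x*, br(x*)) + δ/C, then for every y ∈ BR(x*) we have x̂_y ≥ x*_y − δ. -/
/-- with slope bounds `1/C ≤ (v^y(s) − v^y(t))/(t − s) ≤ C`,
if `v(x̂, br(x̂)) ≤ v(x*, br(x*)) + δ/C`, then `x̂_y ≥ x*_y − δ` for every
`y ∈ BR(x*)`. -/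
theorem stmt7 {n : ℕ} (hn : 0 < n) (v : Fin n → ℝ → ℝ) (C δ : ℝ)
    (hC : 1 ≤ C) (hδ : 0 ≤ δ)
    (hslope : ∀ y, ∀ s t : ℝ, 0 ≤ s → s < t → t ≤ 1 →
      1 / C ≤ (v y s - v y t) / (t - s) ∧ (v y s - v y t) / (t - s) ≤ C)
    (xhat xstar : Fin n → ℝ)
    (hxhat : xhat ∈ Set.Icc (0 : Fin n → ℝ) 1)
    (hxstar : xstar ∈ Set.Icc (0 : Fin n → ℝ) 1)
    (happrox : agentVal v xhat ≤ agentVal v xstar + δ / C) :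
    ∀ y ∈ brSet v xstar, xstar y - δ ≤ xhat y := by
  intro y hy
  by_contra hcon
  push_neg at hcon
  have hC0 : (0:ℝ) < C := lt_of_lt_of_le one_pos hC
  have h1 : xhat y < xstar y := lt_of_lt_of_le hcon (by linarith)
  have h0 : (0:ℝ) ≤ xhat y := hxhat.1 y
  have h2 : xstar y ≤ 1 := hxstar.2 y
  obtain ⟨hlo, _⟩ := hslope y (xhat y) (xstar y) h0 h1 h2
  have hdiff : (xstar y - xhat y) / C ≤ v y (xhat y) - v y (xstar y) := by
    rw [div_le_iff₀ hC0]
    have := (div_le_div_iff₀ hC0 (by linarith : (0:ℝ) < xstar y - xhat y)).mp hlo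
    linarith
  have hle1 : v y (xhat y) ≤ agentVal v xhat := by
    haveI : Nonempty (Fin n) := ⟨⟨0, hn⟩⟩
    unfold agentVal
    exact le_ciSup (Set.Finite.bddAbove (Set.finite_range (fun y => v y (xhat y)))) y
  have hle2 : agentVal v xstar ≤ v y (xstar y) := by
    haveI : Nonempty (Fin n) := ⟨⟨0, hn⟩⟩
    unfold agentVal
    exact ciSup_le hy
  have hlt : δ / C < (xstar y - xhat y) / C := by
    gcongr
    linarith
  linarith
end
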